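/- (Second version of Peano's Theorem: least and greatest solutions in dimension one.) Let t0, y0 ∈ ℝ and a, b, L > 0, and suppose f : [t0, t0+a] × [y0−b, y0+b] → ℝ is continuous with |f(t,y)| ≤ L for all (t,y) in its domain. Set c = min{a, b/L} and I = [t0, t0+c]. Then there exist differentiable functions φ_*, φ^* : I → ℝ, each with value y0 at t0, each with values in [y0−b, y0+b], and each satisfying y' = f(t,y) on I, such that every differentiable φ : I → ℝ with φ(t0) = y0, values in [y0−b, y0+b], and φ'(t) = f(t, φ(t)) on I satisfies φ_*(t) ≤ φ(t) ≤ φ^*(t) for all t ∈ I. -/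

import Mathlib

/-!
Extend `f` from the rectangle to a bounded, uniformly continuous field `F` on `ℝ × ℝ`; every
solution of `y' = F t y` from `y0` moves at speed at most `L`, so on `[t0, t0 + c]` it stays in
the band `[y0 - b, y0 + b]`, where `F = f`. For `F` itself, averaging in `y` over short intervals
gives Lipschitz fields `H n` with `F < H (n + 1) < H n` and `H n → F` uniformly. The
Picard–Lindelöf solutions `g n` of `y' = H n t y` then decrease in `n` and lie above every
solution of `y' = F t y`, by the strict comparison principle. Their limit satisfies the integral
equation of `F`, hence is the greatest solution; the least one comes from `y ↦ -y`.
-/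

open Set Filter Topology Function ODE MeasureTheory Interval
open scoped NNReal

def IsSolutionOn (G : ℝ → ℝ → ℝ) (s : Set ℝ) (φ : ℝ → ℝ) : Prop :=
  ∀ t ∈ s, HasDerivWithinAt φ (G t (φ t)) s t

namespace IsSolutionOn

variable {G G₁ G₂ : ℝ → ℝ → ℝ} {s : Set ℝ} {φ φ₁ φ₂ : ℝ → ℝ} {a b : ℝ}

theorem continuousOn (hφ : IsSolutionOn G s φ) : ContinuousOn φ s :=
  fun t ht => (hφ t ht).continuousWithinAt

theorem congr (hφ : IsSolutionOn G s φ) (hG : ∀ t ∈ s, G t (φ t) = G₁ t (φ t)) :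
    IsSolutionOn G₁ s φ :=
  fun t ht => hG t ht ▸ hφ t ht

theorem neg (hφ : IsSolutionOn G s φ) : IsSolutionOn (fun t y => -G t (-y)) s (-φ) :=
  fun t ht => by simpa using (hφ t ht).neg

theorem abs_sub_le {M : ℝ≥0} (hφ : IsSolutionOn G (Icc a b) φ) (hGM : ∀ t y, |G t y| ≤ M)
    {t : ℝ} (ht : t ∈ Icc a b) : |φ t - φ a| ≤ M * (t - a) :=
  norm_image_sub_le_of_norm_deriv_le_segment' hφ (fun t _ => hGM t (φ t)) t ht

theorem mem_Icc_of_mul_le {M : ℝ≥0} {r : ℝ} (hφ : IsSolutionOn G (Icc a b) φ)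
    (hGM : ∀ t y, |G t y| ≤ M) (hr : M * (b - a) ≤ r) {t : ℝ} (ht : t ∈ Icc a b) :
    φ t ∈ Icc (φ a - r) (φ a + r) := by
  have hφt := abs_le.1 (hφ.abs_sub_le hGM ht)
  have : (M : ℝ) * (t - a) ≤ M * (b - a) := mul_le_mul_of_nonneg_left (by linarith [ht.2]) M.2
  constructor <;> linarith [hφt.1, hφt.2]

theorem lipschitzOnWith {M : ℝ≥0} (hφ : IsSolutionOn G (Icc a b) φ)
    (hGM : ∀ t y, |G t y| ≤ M) : LipschitzOnWith M φ (Icc a b) :=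
  (convex_Icc a b).lipschitzOnWith_of_nnnorm_hasDerivWithin_le hφ fun t _ => by
    rw [← NNReal.coe_le_coe, coe_nnnorm]; exact hGM t (φ t)

theorem le_of_lt (h₁ : IsSolutionOn G₁ (Icc a b) φ₁) (h₂ : IsSolutionOn G₂ (Icc a b) φ₂)
    (hG : ∀ t y, G₁ t y < G₂ t y) (ha : φ₁ a ≤ φ₂ a) : ∀ t ∈ Icc a b, φ₁ t ≤ φ₂ t :=
  fun _ ht => image_le_of_deriv_right_lt_deriv_boundary' h₁.continuousOn
    (fun x hx => (h₁ x (Ico_subset_Icc_self hx)).mono_of_mem_nhdsWithin (Icc_mem_nhdsGE_of_mem hx))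
    ha h₂.continuousOn
    (fun x hx => (h₂ x (Ico_subset_Icc_self hx)).mono_of_mem_nhdsWithin (Icc_mem_nhdsGE_of_mem hx))
    (fun x _ hx => hx ▸ hG x (φ₂ x)) ht

theorem eq_picard (hφ : IsSolutionOn G (Icc a b) φ) (hG : Continuous (uncurry G))
    {t : ℝ} (ht : t ∈ Icc a b) : φ t = picard G a (φ a) φ t := by
  have hsub : uIcc a t ⊆ Icc a b := uIcc_subset_Icc (left_mem_Icc.2 (ht.1.trans ht.2)) ht
  exact (picard_eq_of_hasDerivAt (u := univ) hG.continuousOn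
    (fun t' ht' => (hφ t' (hsub ht')).mono hsub) (mapsTo_univ _ _)).symm

end IsSolutionOn

theorem LipschitzOnWith.of_tendsto {α β ι : Type*} [PseudoMetricSpace α] [PseudoMetricSpace β]
    {l : Filter ι} [l.NeBot] {f : ι → α → β} {g : α → β} {s : Set α} {K : ℝ≥0}
    (hf : ∀ i, LipschitzOnWith K (f i) s) (hfg : ∀ x ∈ s, Tendsto (fun i => f i x) l (𝓝 (g x))) :
    LipschitzOnWith K g s :=
  LipschitzOnWith.of_dist_le_mul fun x hx y hy =>
    le_of_tendsto_of_tendsto' ((hfg x hx).dist (hfg y hy)) tendsto_const_nhds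
      fun i => (hf i).dist_le_mul x hx y hy

theorem isSolutionOn_of_tendsto {G : ℝ → ℝ → ℝ} {H : ℕ → ℝ → ℝ → ℝ} {g : ℕ → ℝ → ℝ}
    {ψ : ℝ → ℝ} {a b : ℝ} {M : ℝ≥0} (hG : Continuous (uncurry G))
    (hHc : ∀ n, Continuous (uncurry (H n)))
    (hHG : TendstoUniformly (fun n => uncurry (H n)) (uncurry G) atTop)
    (hHM : ∀ n t y, |H n t y| ≤ M) (hg : ∀ n, IsSolutionOn (H n) (Icc a b) (g n))
    (hgψ : ∀ t ∈ Icc a b, Tendsto (fun n => g n t) atTop (𝓝 (ψ t))) :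
    IsSolutionOn G (Icc a b) ψ := by
  have hψ : ContinuousOn ψ (Icc a b) :=
    (LipschitzOnWith.of_tendsto (fun n => (hg n).lipschitzOnWith (hHM n)) hgψ).continuousOn
  have hψ_picard : ∀ t ∈ Icc a b, ψ t = picard G a (ψ a) ψ t := by
    intro t ht
    have ha : a ∈ Icc a b := left_mem_Icc.2 (ht.1.trans ht.2)
    have hsub : Ι a t ⊆ Icc a b := uIoc_subset_uIcc.trans (uIcc_subset_Icc ha ht)
    have hint : Tendsto (fun n => ∫ s in a..t, H n s (g n s)) atTop
        (𝓝 (∫ s in a..t, G s (ψ s))) := by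
      refine intervalIntegral.tendsto_integral_filter_of_dominated_convergence (fun _ => M)
        (Eventually.of_forall fun n => ?_) (Eventually.of_forall fun n => ae_of_all _ fun s _ => ?_)
        intervalIntegrable_const (ae_of_all _ fun s hs => ?_)
      · exact (((hHc n).comp_continuousOn (continuousOn_id.prodMk (hg n).continuousOn)).mono
          hsub).aestronglyMeasurable measurableSet_uIoc
      · exact hHM n s (g n s)
      · exact hHG.tendsto_comp hG.continuousAt (tendsto_const_nhds.prodMk_nhds (hgψ s (hsub hs)))
    refine tendsto_nhds_unique (hgψ t ht) ?_
    simp_rw [fun n => (hg n).eq_picard (hHc n) ht, picard_apply]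
    exact (hgψ a ha).add hint
  intro t ht
  exact (hasDerivWithinAt_picard_Icc (left_mem_Icc.2 (ht.1.trans ht.2)) hG.continuousOn hψ
    (fun _ _ => mem_univ _) (ψ a) ht).congr hψ_picard (hψ_picard t ht)

noncomputable def spaceAverage (G : ℝ → ℝ → ℝ) (δ t y : ℝ) : ℝ :=
  δ⁻¹ * ∫ u in y..y + δ, G t u

section spaceAverage

variable {G : ℝ → ℝ → ℝ} {δ : ℝ}

theorem continuous_spaceAverage (hG : Continuous (uncurry G)) :
    Continuous (uncurry (spaceAverage G δ)) := by
  have hprim : ∀ p : ℝ × ℝ, ∫ u in p.2..p.2 + δ, G p.1 u =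
      (∫ u in (0 : ℝ)..p.2 + δ, G p.1 u) - ∫ u in (0 : ℝ)..p.2, G p.1 u := fun p => by
    have hGt : Continuous (G p.1) := hG.comp (Continuous.prodMk_right p.1)
    rw [intervalIntegral.integral_interval_sub_left (hGt.intervalIntegrable _ _)
      (hGt.intervalIntegrable _ _)]
  have hG' : Continuous (uncurry fun (p : ℝ × ℝ) u => G p.1 u) :=
    hG.comp (continuous_fst.fst.prodMk continuous_snd)
  simp only [uncurry_def, spaceAverage, hprim]
  exact continuous_const.mul
    ((intervalIntegral.continuous_parametric_intervalIntegral_of_continuous hG'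
      (continuous_snd.add continuous_const)).sub
      (intervalIntegral.continuous_parametric_intervalIntegral_of_continuous hG' continuous_snd))

theorem lipschitzWith_spaceAverage {t : ℝ} {M : ℝ≥0} (hG : Continuous (G t))
    (hGM : ∀ y, |G t y| ≤ M) (hδ : 0 < δ) :
    LipschitzWith (2 * M / δ.toNNReal) (spaceAverage G δ t) := by
  have hint : ∀ y y', |∫ u in y..y', G t u| ≤ M * |y' - y| := fun y y' => by
    simpa only [Real.norm_eq_abs] using
      intervalIntegral.norm_integral_le_of_norm_le_const (f := G t) fun u _ => hGM u
  refine LipschitzWith.of_dist_le_mul fun y y' => ?_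
  rw [Real.dist_eq, Real.dist_eq, spaceAverage, spaceAverage, ← mul_sub,
    intervalIntegral.integral_interval_sub_interval_comm (hG.intervalIntegrable _ _)
      (hG.intervalIntegrable _ _) (hG.intervalIntegrable _ _),
    abs_mul, abs_inv, abs_of_pos hδ]
  calc δ⁻¹ * |(∫ u in y..y', G t u) - ∫ u in y + δ..y' + δ, G t u|
      ≤ δ⁻¹ * (M * |y' - y| + M * |y' + δ - (y + δ)|) := by
        gcongr; exact (abs_sub _ _).trans (add_le_add (hint _ _) (hint _ _))
    _ = _ := by
        rw [add_sub_add_right_eq_sub, abs_sub_comm, NNReal.coe_div, Real.coe_toNNReal _ hδ.le]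
        push_cast; ring

theorem abs_spaceAverage_sub_le {t y η : ℝ} (hG : Continuous (G t)) (hδ : 0 < δ)
    (hη : ∀ u ∈ Icc y (y + δ), |G t u - G t y| ≤ η) : |spaceAverage G δ t y - G t y| ≤ η := by
  have hsub : spaceAverage G δ t y - G t y = δ⁻¹ * ∫ u in y..y + δ, (G t u - G t y) := by
    rw [spaceAverage, intervalIntegral.integral_sub (hG.intervalIntegrable _ _)
      intervalIntegrable_const, intervalIntegral.integral_const, smul_eq_mul, add_sub_cancel_left]
    field_simp
  have hbound : |∫ u in y..y + δ, (G t u - G t y)| ≤ η * δ := by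
    have := intervalIntegral.norm_integral_le_of_norm_le_const
      (f := fun u => G t u - G t y) fun u hu => hη u (by
        rw [uIoc_of_le (le_add_of_nonneg_right hδ.le)] at hu; exact Ioc_subset_Icc_self hu)
    rwa [add_sub_cancel_left, abs_of_pos hδ] at this
  rw [hsub, abs_mul, abs_inv, abs_of_pos hδ]
  calc δ⁻¹ * |∫ u in y..y + δ, (G t u - G t y)| ≤ δ⁻¹ * (η * δ) := by gcongr
    _ = η := by field_simp

end spaceAverage

theorem exists_lipschitz_approx {G : ℝ → ℝ → ℝ} {M : ℝ≥0} {η : ℝ}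
    (hG : UniformContinuous (uncurry G)) (hGM : ∀ t y, |G t y| ≤ M) (hη : 0 < η) :
    ∃ (H : ℝ → ℝ → ℝ) (K : ℝ≥0), Continuous (uncurry H) ∧ (∀ t, LipschitzWith K (H t)) ∧
      ∀ t y, G t y + η ≤ H t y ∧ H t y ≤ G t y + 3 * η := by
  obtain ⟨δ, hδ, hδG⟩ := Metric.uniformContinuous_iff.1 hG η hη
  have hGt : ∀ t, Continuous (G t) := fun t => hG.continuous.comp (Continuous.prodMk_right t)
  have hclose : ∀ t y, |spaceAverage G (δ / 2) t y - G t y| ≤ η := fun t y =>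
    abs_spaceAverage_sub_le (hGt t) (half_pos hδ) fun u hu => by
      refine (hδG (a := (t, u)) (b := (t, y)) ?_).le
      rw [Prod.dist_eq, dist_self, Real.dist_eq, abs_of_nonneg (sub_nonneg.2 hu.1)]
      exact max_lt hδ (by linarith [hu.2])
  refine ⟨fun t y => spaceAverage G (δ / 2) t y + 2 * η, _,
    (continuous_spaceAverage hG.continuous).add continuous_const,
    fun t => (lipschitzWith_spaceAverage (hGt t) (hGM t) (half_pos hδ)).add (LipschitzWith.const _),
    fun t y => ?_⟩
  have := abs_le.1 (hclose t y)
  constructor <;> linarith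

theorem exists_isSolutionOn_of_lipschitzWith {G : ℝ → ℝ → ℝ} {K M : ℝ≥0} {a b : ℝ}
    (hG : Continuous (uncurry G)) (hK : ∀ t, LipschitzWith K (G t)) (hGM : ∀ t y, |G t y| ≤ M)
    (hab : a ≤ b) (y0 : ℝ) : ∃ φ, φ a = y0 ∧ IsSolutionOn G (Icc a b) φ := by
  have hpl : IsPicardLindelof G (tmin := a) (tmax := b) ⟨a, left_mem_Icc.2 hab⟩ y0
      (M * (b - a).toNNReal) 0 M K :=
    { lipschitzOnWith := fun t _ => (hK t).lipschitzOnWith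
      continuousOn := fun y _ => (hG.comp (Continuous.prodMk_left y)).continuousOn
      norm_le := fun t _ y _ => hGM t y
      mul_max_le := by simp [hab] }
  exact hpl.exists_eq_forall_mem_Icc_hasDerivWithinAt₀

theorem exists_strictAnti_lipschitz_approx {G : ℝ → ℝ → ℝ} {M : ℝ≥0}
    (hG : UniformContinuous (uncurry G)) (hGM : ∀ t y, |G t y| ≤ M) :
    ∃ (H : ℕ → ℝ → ℝ → ℝ) (K : ℕ → ℝ≥0), (∀ n, Continuous (uncurry (H n))) ∧
      (∀ n t, LipschitzWith (K n) (H n t)) ∧ (∀ n t y, |H n t y| ≤ ↑(M + 3)) ∧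
      (∀ n t y, G t y < H n t y) ∧ (∀ n t y, H (n + 1) t y < H n t y) ∧
      TendstoUniformly (fun n => uncurry (H n)) (uncurry G) atTop := by
  -- With `η = 4⁻ⁿ`: `H (n + 1) ≤ G + 3 * 4⁻ⁿ⁻¹ < G + 4⁻ⁿ ≤ H n`.
  have hη : ∀ n : ℕ, 0 < (1 / 4 : ℝ) ^ n := fun n => by positivity
  choose H K hHc hHK hH using fun n => exists_lipschitz_approx hG hGM (hη n)
  refine ⟨H, K, hHc, hHK, fun n t y => ?_, fun n t y => by linarith [(hH n t y).1, hη n],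
    fun n t y => by linarith [(hH (n + 1) t y).2, (hH n t y).1, hη n, pow_succ (1 / 4 : ℝ) n],
    Metric.tendstoUniformly_iff.2 fun ε hε => ?_⟩
  · have hη1 : (1 / 4 : ℝ) ^ n ≤ 1 := pow_le_one₀ (by norm_num) (by norm_num)
    have := abs_le.1 (hGM t y)
    push_cast
    exact abs_le.2 ⟨by linarith [(hH n t y).1, hη n], by linarith [(hH n t y).2]⟩
  · have h3η : Tendsto (fun n : ℕ => 3 * (1 / 4 : ℝ) ^ n) atTop (𝓝 0) := by
      simpa using (tendsto_pow_atTop_nhds_zero_of_lt_one (r := (1 / 4 : ℝ)) (by norm_num)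
        (by norm_num)).const_mul 3
    filter_upwards [h3η.eventually (gt_mem_nhds hε)] with n hn ⟨t, y⟩
    rw [uncurry_apply_pair, uncurry_apply_pair, Real.dist_eq, abs_sub_comm,
      abs_of_nonneg (by linarith [(hH n t y).1, hη n])]
    linarith [(hH n t y).2]

theorem exists_greatest_solution {G : ℝ → ℝ → ℝ} {M : ℝ≥0} {a b : ℝ}
    (hG : UniformContinuous (uncurry G)) (hGM : ∀ t y, |G t y| ≤ M) (hab : a ≤ b) (y0 : ℝ) :
    ∃ ψ, ψ a = y0 ∧ IsSolutionOn G (Icc a b) ψ ∧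
      ∀ φ, φ a = y0 → IsSolutionOn G (Icc a b) φ → ∀ t ∈ Icc a b, φ t ≤ ψ t := by
  obtain ⟨H, K, hHc, hHK, hHM, hGH, hHanti, hunif⟩ := exists_strictAnti_lipschitz_approx hG hGM
  choose g hg0 hg using fun n =>
    exists_isSolutionOn_of_lipschitzWith (hHc n) (hHK n) (hHM n) hab y0
  have hanti : ∀ t ∈ Icc a b, Antitone fun n => g n t := fun t ht =>
    antitone_nat_of_succ_le fun n =>
      (hg (n + 1)).le_of_lt (hg n) (hHanti n) (by rw [hg0, hg0]) t ht
  have hbdd : ∀ t ∈ Icc a b, BddBelow (range fun n => g n t) := fun t ht =>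
    ⟨y0 - ↑(M + 3) * (b - a), forall_mem_range.2 fun n =>
      hg0 n ▸ ((hg n).mem_Icc_of_mul_le (hHM n) le_rfl ht).1⟩
  refine ⟨fun t => ⨅ n, g n t, by simp [hg0],
    isSolutionOn_of_tendsto hG.continuous hHc hunif hHM hg
      fun t ht => tendsto_atTop_ciInf (hanti t ht) (hbdd t ht),
    fun φ hφ0 hφ t ht => le_ciInf fun n => hφ.le_of_lt (hg n) (hGH n) (by rw [hφ0, hg0]) t ht⟩

theorem exists_least_solution {G : ℝ → ℝ → ℝ} {M : ℝ≥0} {a b : ℝ}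
    (hG : UniformContinuous (uncurry G)) (hGM : ∀ t y, |G t y| ≤ M) (hab : a ≤ b) (y0 : ℝ) :
    ∃ ψ, ψ a = y0 ∧ IsSolutionOn G (Icc a b) ψ ∧
      ∀ φ, φ a = y0 → IsSolutionOn G (Icc a b) φ → ∀ t ∈ Icc a b, ψ t ≤ φ t := by
  have hG' : UniformContinuous (uncurry fun t y => -G t (-y)) :=
    (hG.comp (uniformContinuous_fst.prodMk uniformContinuous_snd.neg)).neg
  obtain ⟨ψ, hψ0, hψ, hψ_ge⟩ :=
    exists_greatest_solution hG' (fun t y => by simpa using hGM t (-y)) hab (-y0)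
  refine ⟨-ψ, by simp [hψ0], by simpa using hψ.neg, fun φ hφ0 hφ t ht => ?_⟩
  simpa [neg_le] using hψ_ge (-φ) (by simp [hφ0]) hφ.neg t ht

theorem exists_uniformContinuous_extend {f : ℝ → ℝ → ℝ} {a b c d L : ℝ} (hab : a ≤ b)
    (hcd : c ≤ d) (hf : ContinuousOn (uncurry f) (Icc a b ×ˢ Icc c d))
    (hfL : ∀ t ∈ Icc a b, ∀ y ∈ Icc c d, |f t y| ≤ L) :
    ∃ F : ℝ → ℝ → ℝ, UniformContinuous (uncurry F) ∧ (∀ t y, |F t y| ≤ L) ∧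
      ∀ t ∈ Icc a b, ∀ y ∈ Icc c d, F t y = f t y := by
  have hproj : ∀ {p q : ℝ} (hpq : p ≤ q), UniformContinuous fun t => (projIcc p q hpq t : ℝ) :=
    fun hab => uniformContinuous_subtype_val.comp (LipschitzWith.projIcc hab).uniformContinuous
  have hP : UniformContinuous fun p : ℝ × ℝ =>
      ((projIcc a b hab p.1 : ℝ), (projIcc c d hcd p.2 : ℝ)) :=
    ((hproj hab).comp uniformContinuous_fst).prodMk ((hproj hcd).comp uniformContinuous_snd)
  have hfu : UniformContinuousOn (uncurry f) (Icc a b ×ˢ Icc c d) :=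
    (isCompact_Icc.prod isCompact_Icc).uniformContinuousOn_of_continuous hf
  refine ⟨fun t y => f (projIcc a b hab t) (projIcc c d hcd y),
    uniformContinuousOn_univ.1 (hfu.comp hP.uniformContinuousOn
      fun p _ => ⟨(projIcc a b hab p.1).2, (projIcc c d hcd p.2).2⟩),
    fun t y => hfL _ (projIcc a b hab t).2 _ (projIcc c d hcd y).2,
    fun t ht y hy => by simp only [projIcc_of_mem hab ht, projIcc_of_mem hcd hy]⟩

theorem peano_least_greatest (t0 y0 a b L : ℝ)
    (ha : 0 < a) (hb : 0 < b) (hL : 0 < L)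
    (f : ℝ → ℝ → ℝ)
    (hf : ContinuousOn (fun p : ℝ × ℝ => f p.1 p.2)
      (Icc t0 (t0 + a) ×ˢ Icc (y0 - b) (y0 + b)))
    (hfL : ∀ t ∈ Icc t0 (t0 + a), ∀ y ∈ Icc (y0 - b) (y0 + b), |f t y| ≤ L)
    (c : ℝ) (hc : c = min a (b / L)) :
    ∃ φlow φhigh : ℝ → ℝ,
      (φlow t0 = y0 ∧ (∀ t ∈ Icc t0 (t0 + c), φlow t ∈ Icc (y0 - b) (y0 + b)) ∧
        ∀ t ∈ Icc t0 (t0 + c),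
          HasDerivWithinAt φlow (f t (φlow t)) (Icc t0 (t0 + c)) t) ∧
      (φhigh t0 = y0 ∧ (∀ t ∈ Icc t0 (t0 + c), φhigh t ∈ Icc (y0 - b) (y0 + b)) ∧
        ∀ t ∈ Icc t0 (t0 + c),
          HasDerivWithinAt φhigh (f t (φhigh t)) (Icc t0 (t0 + c)) t) ∧
      ∀ φ : ℝ → ℝ, φ t0 = y0 →
        (∀ t ∈ Icc t0 (t0 + c), φ t ∈ Icc (y0 - b) (y0 + b)) →
        (∀ t ∈ Icc t0 (t0 + c),
          HasDerivWithinAt φ (f t (φ t)) (Icc t0 (t0 + c)) t) →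
        ∀ t ∈ Icc t0 (t0 + c), φlow t ≤ φ t ∧ φ t ≤ φhigh t := by
  lift L to ℝ≥0 using hL.le
  have htc : t0 ≤ t0 + c := le_add_of_nonneg_right (hc ▸ le_min ha.le (div_pos hb hL).le)
  have hLc : L * c ≤ b := hc ▸ (mul_le_mul_of_nonneg_left (min_le_right _ _) L.2).trans_eq
    (mul_div_cancel₀ b hL.ne')
  have hI : Icc t0 (t0 + c) ⊆ Icc t0 (t0 + a) :=
    Icc_subset_Icc_right (by linarith [hc ▸ min_le_left a (b / L)])
  obtain ⟨F, hF, hFL, hFf⟩ := exists_uniformContinuous_extend (by linarith : t0 ≤ t0 + a)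
    (by linarith : y0 - b ≤ y0 + b) hf hfL
  have hband : ∀ φ, φ t0 = y0 → IsSolutionOn F (Icc t0 (t0 + c)) φ →
      ∀ t ∈ Icc t0 (t0 + c), φ t ∈ Icc (y0 - b) (y0 + b) := fun φ hφ0 hφ t ht =>
    hφ0 ▸ hφ.mem_Icc_of_mul_le hFL (by rwa [add_sub_cancel_left]) ht
  have hsol : ∀ φ, φ t0 = y0 → IsSolutionOn F (Icc t0 (t0 + c)) φ →
      IsSolutionOn f (Icc t0 (t0 + c)) φ := fun φ hφ0 hφ =>
    hφ.congr fun t ht => hFf t (hI ht) _ (hband φ hφ0 hφ t ht)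
  obtain ⟨φlow, hlow0, hlow, hlow_le⟩ := exists_least_solution hF hFL htc y0
  obtain ⟨φhigh, hhigh0, hhigh, hhigh_ge⟩ := exists_greatest_solution hF hFL htc y0
  refine ⟨φlow, φhigh, ⟨hlow0, hband _ hlow0 hlow, hsol _ hlow0 hlow⟩,
    ⟨hhigh0, hband _ hhigh0 hhigh, hsol _ hhigh0 hhigh⟩, fun φ hφ0 hφb hφ t ht => ?_⟩
  have hφF : IsSolutionOn F (Icc t0 (t0 + c)) φ :=
    IsSolutionOn.congr hφ fun t ht => (hFf t (hI ht) _ (hφb t ht)).symm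
  exact ⟨hlow_le φ hφ0 hφF t ht, hhigh_ge φ hφ0 hφF t ht⟩
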